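/- (Denotational Completeness) For every type σ and every value a in Bσ there exists a closed term s of type σ such that B̂ s = a. -/

import Mathlib

namespace PTT


/-- Simple types over a single base type `B`. -/
inductive Ty : Type
  | base : Ty
  | arrow : Ty → Ty → Ty
deriving DecidableEq

/-- Names: the constants `⊥` and `→`, and variables (an index together with a type). -/
inductive Name : Type
  | bot : Name
  | imp : Name
  | var : ℕ → Ty → Name
deriving DecidableEq

/-- The type of a name. -/
def Name.ty : Name → Ty
  | .bot => .base
  | .imp => .arrow .base (.arrow .base .base)
  | .var _ σ => σ

/-- Terms: names, abstraction over a variable, application. -/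
inductive Tm : Type
  | name : Name → Tm
  | lam : ℕ → Ty → Tm → Tm
  | app : Tm → Tm → Tm
deriving DecidableEq

/-- The term `⊥`. -/
def botTm : Tm := .name .bot

/-- The variable `(n, σ)` as a term. -/
def vr (n : ℕ) (σ : Ty) : Tm := .name (.var n σ)

/-- Implication `s → t`. -/
def impTm (s t : Tm) : Tm := .app (.app (.name .imp) s) t

/-- `⊤ := ⊥ → ⊥`. -/
def topTm : Tm := impTm botTm botTm

/-- `¬ s := s → ⊥`. -/
def negTm (s : Tm) : Tm := impTm s botTm

/-- `s ∨ t := (s → t) → t`. -/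
def orTm (s t : Tm) : Tm := impTm (impTm s t) t

/-- `s ∧ t := ¬(¬s ∨ ¬t)`. -/
def andTm (s t : Tm) : Tm := negTm (orTm (negTm s) (negTm t))

/-- `s ≡ t := (s → t) ∧ (t → s)`. -/
def equivTm (s t : Tm) : Tm := andTm (impTm s t) (impTm t s)

/-- The typing relation. -/
inductive HasTy : Tm → Ty → Prop
  | name (x : Name) : HasTy (.name x) x.ty
  | lam {n σ s τ} : HasTy s τ → HasTy (.lam n σ s) (.arrow σ τ)
  | app {s t σ τ} : HasTy s (.arrow σ τ) → HasTy t σ → HasTy (.app s t) τ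

/-- Free variables of a term. -/
def fv : Tm → Finset (ℕ × Ty)
  | .name (.var n σ) => {(n, σ)}
  | .name _ => ∅
  | .lam n σ s => (fv s).erase (n, σ)
  | .app s t => fv s ∪ fv t

/-- A term is closed if it has no free variables. -/
def Closed (s : Tm) : Prop := fv s = ∅

/-- Capture-free parallel substitution (bound variables are renamed). -/
def substAux (ρ : ℕ × Ty → Tm) : Tm → Tm
  | .name (.var n σ) => ρ (n, σ)
  | .name x => .name x
  | .app s t => .app (substAux ρ s) (substAux ρ t)
  | .lam n σ s =>
      let used : Finset ℕ :=
        ((fv s).erase (n, σ)).biUnion (fun p => (fv (ρ p)).image Prod.fst)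
      let m : ℕ := used.sup id + 1
      .lam m σ (substAux (Function.update ρ (n, σ) (vr m σ)) s)

/-- Capture-free substitution `s[(n,σ) := t]`. -/
def subst (s : Tm) (n : ℕ) (σ : Ty) (t : Tm) : Tm :=
  substAux (Function.update (fun p => vr p.1 p.2) (n, σ) t) s

/-- Contexts: terms with exactly one hole (possibly under binders). -/
inductive Ctx : Type
  | hole : Ctx
  | lam : ℕ → Ty → Ctx → Ctx
  | appL : Ctx → Tm → Ctx
  | appR : Tm → Ctx → Ctx

/-- Filling the hole of a context with a term (capturing is allowed). -/
def Ctx.fill : Ctx → Tm → Tm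
  | .hole, s => s
  | .lam n σ C, s => .lam n σ (C.fill s)
  | .appL C t, s => .app (C.fill s) t
  | .appR t C, s => .app t (C.fill s)

/-- `C` captures the variable `p` if the hole of `C` lies below a binder for `p`. -/
def Ctx.captures : Ctx → ℕ × Ty → Prop
  | .hole, _ => False
  | .lam n σ C, p => p = (n, σ) ∨ C.captures p
  | .appL C _, p => C.captures p
  | .appR _ C, p => C.captures p

/-- `C` is admissible for `A` if it captures no variable free in `A`. -/
def Ctx.Admissible (C : Ctx) (A : Finset Tm) : Prop :=
  ∀ p ∈ A.biUnion fv, ¬ C.captures p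

/-- `s` is a subterm of `t`. -/
def Subterm (s t : Tm) : Prop := ∃ C : Ctx, C.fill s = t

/-- β-redexes. -/
def IsBetaRedex : Tm → Prop
  | .app (.lam _ _ _) _ => True
  | _ => False

/-- A term is β-normal if none of its subterms is a β-redex. -/
def BetaNormal (t : Tm) : Prop := ∀ s, Subterm s t → ¬ IsBetaRedex s

/-- Lambda equivalence: the least equivalence on well-typed terms containing
α-, β-, η-conversion and closed under arbitrary contexts. -/
inductive LamEq : Tm → Tm → Prop
  | refl {s σ} : HasTy s σ → LamEq s s
  | symm {s t} : LamEq s t → LamEq t s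
  | trans {s t u} : LamEq s t → LamEq t u → LamEq s u
  | alpha {n m σ s τ} : HasTy (.lam n σ s) τ → (m, σ) ∉ fv s →
      LamEq (.lam n σ s) (.lam m σ (subst s n σ (vr m σ)))
  | beta {n σ s t τ} : HasTy (.app (.lam n σ s) t) τ →
      LamEq (.app (.lam n σ s) t) (subst s n σ t)
  | eta {n σ s τ} : HasTy (.lam n σ (.app s (vr n σ))) τ → (n, σ) ∉ fv s →
      LamEq (.lam n σ (.app s (vr n σ))) s
  | ctx {s t σ} (C : Ctx) : LamEq s t → HasTy (C.fill s) σ → LamEq (C.fill s) (C.fill t)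

/-- The standard set-theoretic interpretation of types: `B` is interpreted as the
two truth values (`Bool`), functional types as full function spaces. -/
def Ty.sem : Ty → Type
  | .base => Bool
  | .arrow σ τ => σ.sem → τ.sem

def Ty.semDefault : (σ : Ty) → σ.sem
  | .base => false
  | .arrow _ τ => fun _ => τ.semDefault

instance (σ : Ty) : Inhabited σ.sem := ⟨σ.semDefault⟩

noncomputable instance Ty.semFintype : (σ : Ty) → Fintype σ.sem
  | .base => inferInstanceAs (Fintype Bool)
  | .arrow σ τ =>
      letI := Ty.semFintype σ
      letI := Ty.semFintype τ
      letI := Classical.decEq σ.sem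
      inferInstanceAs (Fintype (σ.sem → τ.sem))

def Ty.semCast {σ τ : Ty} (h : σ = τ) (v : σ.sem) : τ.sem := h ▸ v

/-- An interpretation assigns to every variable a value of the corresponding type
(the constants `⊥` and `→` have their values fixed). -/
def Interp : Type := ℕ → (σ : Ty) → σ.sem

def Interp.update (I : Interp) (n : ℕ) (σ : Ty) (v : σ.sem) : Interp :=
  fun m τ => if h : m = n ∧ τ = σ then Ty.semCast h.2.symm v else I m τ

/-- Type inference. -/
def typeOf : Tm → Option Ty
  | .name x => some x.ty
  | .lam _ σ s => (typeOf s).map (Ty.arrow σ)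
  | .app s t =>
      match typeOf s, typeOf t with
      | some (.arrow σ τ), some σ' => if σ = σ' then some τ else none
      | _, _ => none

/-- The canonical extension `Î` of an interpretation to all terms: `eval I s σ`
is the value of `s` at type `σ` (on well-typed terms this is the usual
denotation; junk default values are used at type mismatches). -/
def eval (I : Interp) : Tm → (σ : Ty) → σ.sem
  | .name (.var n τ), σ => if h : τ = σ then Ty.semCast h (I n τ) else default
  | .name .bot, σ =>
      match σ with
      | .base => false
      | _ => default
  | .name .imp, σ =>
      match σ with
      | .arrow .base (.arrow .base .base) => fun a b => !a || b
      | _ => default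
  | .app s t, σ =>
      match typeOf t with
      | some τ => eval I s (.arrow τ σ) (eval I t τ)
      | none => default
  | .lam n τ s, σ =>
      match σ with
      | .base => default
      | .arrow σ₁ σ₂ =>
          if h : σ₁ = τ then
            fun a => eval (I.update n τ (Ty.semCast h a)) s σ₂
          else default

/-- `I` satisfies the formula `s` if `Î s = 1`. -/
def Satisfies (I : Interp) (s : Tm) : Prop := eval I s .base = true

/-- A formula is valid if every interpretation satisfies it. -/
def ValidFml (s : Tm) : Prop := ∀ I : Interp, Satisfies I s

/-- A sequent `A ⇒ s` is valid if every interpretation satisfying `A` satisfies `s`. -/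
def ValidSeq (A : Finset Tm) (s : Tm) : Prop :=
  ∀ I : Interp, (∀ t ∈ A, Satisfies I t) → Satisfies I s

/-- Finite disjunction (the empty disjunction is `⊥`). -/
def orList : List Tm → Tm
  | [] => botTm
  | [s] => s
  | s :: l => orTm s (orList l)

/-- Finite conjunction (the empty conjunction is `⊤`). -/
def andList : List Tm → Tm
  | [] => topTm
  | [s] => s
  | s :: l => andTm s (andList l)

/-- The argument types of a type (every type has the form `σ₁…σₙB`). -/
def Ty.args : Ty → List Ty
  | .base => []
  | .arrow σ τ => σ :: τ.args

/-- Tuples of values along a list of types. -/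
def Tup : List Ty → Type
  | [] => PUnit
  | σ :: l => σ.sem × Tup l

noncomputable instance TupFintype : (l : List Ty) → Fintype (Tup l)
  | [] => inferInstanceAs (Fintype PUnit)
  | σ :: l =>
      letI := TupFintype l
      inferInstanceAs (Fintype (σ.sem × Tup l))

/-- Applying a function value to a tuple of arguments (the result type is `B`). -/
def Ty.applyTup : (σ : Ty) → σ.sem → Tup σ.args → Bool
  | .base, a, _ => a
  | .arrow _ τ, f, p => τ.applyTup (f p.1) p.2

/-- Quote/identity data for each type in a list: a quote function and the term `≐`. -/
def ArgData : List Ty → Type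
  | [] => PUnit
  | σ :: l => ((σ.sem → Tm) × Tm) × ArgData l

/-- The conjunction list `x_k ≐_{σ_k} (↓_{σ_k} b_k), …` for a tuple `b`. -/
def eqConj : (l : List Ty) → ArgData l → ℕ → Tup l → List Tm
  | [], _, _, _ => []
  | σ :: l, (d, ds), k, (b, bs) =>
      (.app (.app d.2 (vr k σ)) (d.1 b)) :: eqConj l ds (k + 1) bs

/-- `λ x_k : σ_k. …` binding one variable for each type in the list. -/
def mkLams : (l : List Ty) → ℕ → Tm → Tm
  | [], _, body => body
  | σ :: l, k, body => .lam k σ (mkLams l (k + 1) body)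

/-- The body of the quote term
`↓_{σ₁…σₙB} a := λx₁…xₙ. ⋁_{b₁…bₙ, a b₁…bₙ = 1} ⋀_j x_j ≐_{σ_j} (↓_{σ_j} b_j)`. -/
noncomputable def quoteBodyAux (σ : Ty) (ad : ArgData σ.args) (a : σ.sem) : Tm :=
  mkLams σ.args 0 (orList
    ((((Finset.univ : Finset (Tup σ.args)).toList.filter
        (fun b => σ.applyTup a b))).map
      (fun b => andList (eqConj σ.args ad 0 b))))

/-- `∀σ := λf. ⋀_{a ∈ Bσ} f (↓σ a)`, given the quote function for `σ`. -/
noncomputable def allTmAux (σ : Ty) (q : σ.sem → Tm) : Tm :=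
  .lam 0 (.arrow σ .base)
    (andList (((Finset.univ : Finset σ.sem).toList).map
      (fun a => .app (vr 0 (.arrow σ .base)) (q a))))

mutual
  /-- The quote function `↓σ` together with the identity term `≐σ`. -/
  noncomputable def quoteEq : (σ : Ty) → ((σ.sem → Tm) × Tm)
    | .base =>
        (fun a => quoteBodyAux .base PUnit.unit a,
         .lam 0 .base (.lam 1 .base (equivTm (vr 0 .base) (vr 1 .base))))
    | .arrow σ τ =>
        (fun a => quoteBodyAux (.arrow σ τ) ((quoteEq σ, argData τ) : ArgData (σ :: τ.args)) a,
         .lam 0 (.arrow σ τ) (.lam 1 (.arrow σ τ)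
           (.app (allTmAux σ (quoteEq σ).1)
             (.lam 2 σ
               (.app (.app (quoteEq τ).2
                  (.app (vr 0 (.arrow σ τ)) (vr 2 σ)))
                (.app (vr 1 (.arrow σ τ)) (vr 2 σ)))))))
  /-- Quote/identity data for all argument types of a type. -/
  noncomputable def argData : (σ : Ty) → ArgData σ.args
    | .base => PUnit.unit
    | .arrow σ τ => ((quoteEq σ, argData τ) : ArgData (σ :: τ.args))
end

/-- The quote function `↓σ : Bσ → Λ`. -/
noncomputable def quote (σ : Ty) (a : σ.sem) : Tm := (quoteEq σ).1 a

/-- The term `≐σ : σσB` denoting the identity predicate on `Bσ`. -/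
noncomputable def eqTm (σ : Ty) : Tm := (quoteEq σ).2

/-- The term `∀σ : (σB)B`. -/
noncomputable def allTm (σ : Ty) : Tm := allTmAux σ (quote σ)


/-- Propositional formulas: `s ::= x | ⊥ | s → s` with `x` a variable of type `B`. -/
inductive Propositional : Tm → Prop
  | var (n : ℕ) : Propositional (vr n .base)
  | bot : Propositional botTm
  | imp {s t} : Propositional s → Propositional t → Propositional (impTm s t)

/-- A type-respecting substitution of terms for variables. -/
def IsSubstitution (ρ : ℕ × Ty → Tm) : Prop := ∀ n σ, HasTy (ρ (n, σ)) σ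

/-- A formula is tautologous if it is a substitution instance of a tautology
(a valid propositional formula). -/
def Tautologous (s : Tm) : Prop :=
  ∃ t ρ, Propositional t ∧ ValidFml t ∧ IsSubstitution ρ ∧ s = substAux ρ t

/-- The proof system: Triv, Weak, Ded, MP, DN, Lam and Boolean replacement (BR).
Sequents consist of a finite set of formulas and a formula. -/
inductive Ded : Finset Tm → Tm → Prop
  | triv {A s} : (∀ t ∈ A, HasTy t .base) → HasTy s .base → Ded (insert s A) s
  | weak {A s t} : HasTy s .base → Ded A t → Ded (insert s A) t
  | ded {A s t} : Ded (insert s A) t → Ded A (impTm s t)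
  | mp {A s t} : Ded A (impTm s t) → Ded A s → Ded A t
  | dn {A s} : Ded A (negTm (negTm s)) → Ded A s
  | lam {A s t} : Ded A s → LamEq s t → HasTy t .base → Ded A t
  | br {A s t} (C : Ctx) : C.Admissible A → Ded A (equivTm s t) →
      Ded A (C.fill s) → HasTy (C.fill t) .base → Ded A (C.fill t)

/-!
Induct on `σ`, proving at the same time that every value of `Bσ` is denoted by a closed term and
that equality on `Bσ` is. For `f : Bσ → Bτ`, finiteness of `Bσ` gives
`↓f := λx. if x ≐ ↓a₁ then ↓(f a₁) else if x ≐ ↓a₂ then … `, with a conditional at every type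
obtained by η-expansion of the Boolean one. Definability of all of `Bσ` gives the quantifier
`∀σ p := ⋀ₐ p ↓a`, and then `f ≐ g := ∀σ (λx. f x ≐ g x)`.
-/

local notation "𝔹" => Ty.base
local infixr:25 " ⇒ " => Ty.arrow

theorem HasTy.typeOf_eq {s : Tm} {σ : Ty} (h : HasTy s σ) : typeOf s = some σ := by
  induction h with
  | name x => rfl
  | lam _ ih => simp [typeOf, ih]
  | app _ _ ihs iht => simp [typeOf, ihs, iht]

theorem eval_vr (I : Interp) (n : ℕ) (σ : Ty) : eval I (vr n σ) σ = I n σ := by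
  show (if h : σ = σ then Ty.semCast h (I n σ) else default) = I n σ
  simp [Ty.semCast]

theorem eval_app_of_hasTy (I : Interp) (s : Tm) {t : Tm} {σ : Ty} (ht : HasTy t σ) (τ : Ty) :
    eval I (.app s t) τ = eval I s (σ ⇒ τ) (eval I t σ) := by
  show (match typeOf t with
    | some σ => eval I s (σ ⇒ τ) (eval I t σ)
    | none => default) = _
  rw [ht.typeOf_eq]

theorem eval_lam (I : Interp) (n : ℕ) (σ τ : Ty) (s : Tm) :
    eval I (.lam n σ s) (σ ⇒ τ) = fun a => eval (I.update n σ a) s τ := by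
  show (if h : σ = σ then fun a => eval (I.update n σ (Ty.semCast h a)) s τ else default) = _
  simp [Ty.semCast]

namespace Interp

@[simp]
theorem update_self (I : Interp) (n : ℕ) (σ : Ty) (v : σ.sem) : I.update n σ v n σ = v := by
  simp [update, Ty.semCast]

@[simp]
theorem update_of_ne (I : Interp) {n m : ℕ} (σ τ : Ty) (v : σ.sem) (h : m ≠ n) :
    I.update n σ v m τ = I m τ := by
  simp [update, h]

end Interp

def Expressible (X : Finset (ℕ × Ty)) (σ : Ty) (F : Interp → σ.sem) : Prop :=
  ∃ s, fv s ⊆ X ∧ HasTy s σ ∧ ∀ I, eval I s σ = F I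

abbrev Definable (σ : Ty) (a : σ.sem) : Prop := Expressible ∅ σ fun _ => a

namespace Expressible

variable {X : Finset (ℕ × Ty)} {σ τ : Ty}

theorem of_definable {a : σ.sem} (h : Definable σ a) : Expressible X σ fun _ => a :=
  let ⟨s, hfv, hs, hval⟩ := h
  ⟨s, hfv.trans (Finset.empty_subset X), hs, hval⟩

theorem congr {F G : Interp → σ.sem} (h : Expressible X σ F) (hFG : ∀ I, F I = G I) :
    Expressible X σ G :=
  funext hFG ▸ h

theorem var (n : ℕ) (σ : Ty) (h : (n, σ) ∈ X := by simp) : Expressible X σ fun I => I n σ :=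
  ⟨vr n σ, by simpa [vr, fv] using h, .name _, fun I => eval_vr I n σ⟩

theorem app {F : Interp → (σ ⇒ τ).sem} {A : Interp → σ.sem}
    (hF : Expressible X (σ ⇒ τ) F) (hA : Expressible X σ A) :
    Expressible X τ fun I => F I (A I) :=
  let ⟨s, hsX, hs, hsval⟩ := hF
  let ⟨t, htX, ht, htval⟩ := hA
  ⟨.app s t, Finset.union_subset hsX htX, .app hs ht, fun I => by
    rw [eval_app_of_hasTy I s ht, hsval, htval]⟩

theorem lam (n : ℕ) (σ : Ty) {F : Interp → τ.sem} (h : Expressible (insert (n, σ) X) τ F) :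
    Expressible X (σ ⇒ τ) fun I a => F (I.update n σ a) :=
  let ⟨s, hsX, hs, hsval⟩ := h
  ⟨.lam n σ s, Finset.subset_insert_iff.mp hsX, .lam hs, fun I => by
    rw [eval_lam]
    exact funext fun a => hsval _⟩

theorem bot : Expressible X 𝔹 fun _ => false :=
  ⟨botTm, by simp [botTm, fv], .name _, fun _ => rfl⟩

theorem imp {P Q : Interp → Bool} (hP : Expressible X 𝔹 P) (hQ : Expressible X 𝔹 Q) :
    Expressible X 𝔹 fun I => !P I || Q I :=
  have himp : Expressible X (𝔹 ⇒ 𝔹 ⇒ 𝔹) fun _ a b => !a || b :=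
    ⟨.name .imp, by simp [fv], .name _, fun _ => rfl⟩
  (himp.app hP).app hQ

end Expressible

open Expressible

theorem definable_bool (b : Bool) : Definable 𝔹 b := by
  cases b
  · exact bot
  · exact imp bot bot

theorem definable_cond_base : Definable (𝔹 ⇒ 𝔹 ⇒ 𝔹 ⇒ 𝔹) fun c x y => cond c x y := by
  refine (lam 0 𝔹 <| lam 1 𝔹 <| lam 2 𝔹 <|
    imp (imp (imp (var 0 𝔹) (var 1 𝔹)) (imp (imp (imp (var 0 𝔹) bot) (var 2 𝔹)) bot)) bot).congr
    fun I => ?_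
  funext c x y
  simp
  cases c <;> cases x <;> cases y <;> rfl

theorem definable_cond : ∀ τ : Ty, Definable (𝔹 ⇒ τ ⇒ τ ⇒ τ) fun c x y => cond c x y
  | .base => definable_cond_base
  | .arrow σ τ => by
    refine (lam 0 𝔹 <| lam 1 (σ ⇒ τ) <| lam 2 (σ ⇒ τ) <| lam 3 σ <|
      (((of_definable (definable_cond τ)).app (var 0 𝔹)).app
        ((var 1 (σ ⇒ τ)).app (var 3 σ))).app ((var 2 (σ ⇒ τ)).app (var 3 σ))).congr fun I => ?_
    funext c f g z
    simp
    cases c <;> rfl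

def EqDefinable (σ : Ty) : Prop :=
  ∃ e : σ.sem → σ.sem → Bool, Definable (σ ⇒ σ ⇒ 𝔹) e ∧ ∀ x y, e x y = true ↔ x = y

def ForallDefinable (σ : Ty) : Prop :=
  ∃ A : (σ.sem → Bool) → Bool, Definable ((σ ⇒ 𝔹) ⇒ 𝔹) A ∧
    ∀ p : σ.sem → Bool, A p = true ↔ ∀ a, p a = true

theorem eqDefinable_base : EqDefinable 𝔹 := by
  -- `𝔹.sem` is `Bool` only after unfolding `Ty.sem`, so some goals that `simp` leaves are `rfl`.
  refine ⟨fun x y : Bool => cond x y !y, ?_, fun x y => by cases x <;> cases y <;> simp <;> rfl⟩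
  refine (lam 0 𝔹 <| lam 1 𝔹 <|
    (((of_definable definable_cond_base).app (var 0 𝔹)).app (var 1 𝔹)).app
      (imp (var 1 𝔹) bot)).congr fun I => ?_
  funext x y
  simp
  rfl

theorem forallDefinable_of_definable {σ : Ty} (hσ : ∀ a : σ.sem, Definable σ a) :
    ForallDefinable σ := by
  classical
  suffices h : ∀ S : Finset σ.sem,
      Definable ((σ ⇒ 𝔹) ⇒ 𝔹) fun p : σ.sem → Bool => decide (∀ a ∈ S, p a = true) from
    ⟨_, h Finset.univ, by simp⟩
  intro S
  induction S using Finset.induction_on with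
  | empty => exact (lam 0 (σ ⇒ 𝔹) (imp bot bot)).congr fun I => by funext p; simp
  | insert a S _ ih =>
    refine (lam 0 (σ ⇒ 𝔹) <|
      (((of_definable definable_cond_base).app ((var 0 (σ ⇒ 𝔹)).app (of_definable (hσ a)))).app
        ((of_definable ih).app (var 0 (σ ⇒ 𝔹)))).app bot).congr fun I => ?_
    funext p
    simp only [Interp.update_self, Finset.forall_mem_insert]
    cases p a <;> simp <;> rfl

theorem eqDefinable_arrow {σ τ : Ty} (hσ : ForallDefinable σ) (hτ : EqDefinable τ) :
    EqDefinable (σ ⇒ τ) := by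
  obtain ⟨A, hA, hA_iff⟩ := hσ
  obtain ⟨e, he, he_iff⟩ := hτ
  refine ⟨fun f g : σ.sem → τ.sem => A fun x => e (f x) (g x), ?_,
    fun f g => by
      simp only [hA_iff, he_iff]
      exact funext_iff.symm⟩
  refine (lam 0 (σ ⇒ τ) <| lam 1 (σ ⇒ τ) <| (of_definable hA).app <| lam 2 σ <|
    ((of_definable he).app ((var 0 (σ ⇒ τ)).app (var 2 σ))).app
      ((var 1 (σ ⇒ τ)).app (var 2 σ))).congr fun I => ?_
  funext f g
  simp

theorem definable_update {σ τ : Ty} [DecidableEq σ.sem] (hσ : EqDefinable σ)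
    {g : σ.sem → τ.sem} (hg : Definable (σ ⇒ τ) g) {a : σ.sem} {b : τ.sem}
    (ha : Definable σ a) (hb : Definable τ b) :
    Definable (σ ⇒ τ) (Function.update g a b) := by
  obtain ⟨e, he, he_iff⟩ := hσ
  refine (lam 0 σ <|
    (((of_definable (definable_cond τ)).app
      (((of_definable he).app (var 0 σ)).app (of_definable ha))).app
        (of_definable hb)).app ((of_definable hg).app (var 0 σ))).congr fun I => ?_
  funext x
  simp only [Interp.update_self]
  by_cases hxa : x = a
  · simp [hxa, (he_iff a a).mpr rfl]
  · have hexa : e x a = false := Bool.eq_false_iff.mpr fun h => hxa ((he_iff x a).mp h)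
    simp [hxa, hexa]

theorem definable_arrow {σ τ : Ty} (hσ : ∀ a : σ.sem, Definable σ a) (heq : EqDefinable σ)
    (hτ : ∀ b : τ.sem, Definable τ b) (f : σ.sem → τ.sem) : Definable (σ ⇒ τ) f := by
  classical
  suffices h : ∀ S : Finset σ.sem, Definable (σ ⇒ τ) (S.piecewise f fun _ => default) by
    simpa using h Finset.univ
  intro S
  induction S using Finset.induction_on with
  | empty => exact (lam 0 σ (of_definable (hτ default))).congr fun I => rfl
  | insert a S _ ih =>
    rw [Finset.piecewise_insert]
    exact definable_update heq ih (hσ a) (hτ (f a))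

theorem definable_and_eqDefinable : ∀ σ : Ty, (∀ a : σ.sem, Definable σ a) ∧ EqDefinable σ
  | .base => ⟨definable_bool, eqDefinable_base⟩
  | .arrow σ τ =>
    let ⟨hσ, heqσ⟩ := definable_and_eqDefinable σ
    let ⟨hτ, heqτ⟩ := definable_and_eqDefinable τ
    ⟨definable_arrow hσ heqσ hτ, eqDefinable_arrow (forallDefinable_of_definable hσ) heqτ⟩

/-- Denotational Completeness: every value of the full set-theoretic
type hierarchy is the denotation of some closed term. -/
theorem denotational_completeness (σ : Ty) (a : σ.sem) :
    ∃ s : Tm, Closed s ∧ HasTy s σ ∧ ∀ I : Interp, eval I s σ = a := by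
  obtain ⟨s, hfv, hs, hval⟩ := (definable_and_eqDefinable σ).1 a
  exact ⟨s, Finset.subset_empty.mp hfv, hs, hval⟩

end PTT
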